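/- Let n be the number of validators and let V₁ and V₂ be any two views. Suppose there is a supermajority link C_f → T in V₁ with T.c = C_f.c + 1, and a supermajority link A → B in V₂ with A.c < C_f.c and B.c > C_f.c + 1. Then there exists a set W of validators with 3·|W| ≥ n such that every validator in W violates condition E₂ (surround voting) in the combined message set V₁ ∪ V₂. -/
import Mathlib


/-- A checkpoint: a chain (a list of blocks) together with a slot. -/
structure Checkpoint (β : Type) where
  chain : List β
  c : ℕ
deriving DecidableEq

/-- A fin-vote: a validator together with a source and a target checkpoint. -/
abbrev FinVote (β : Type) (n : ℕ) := Fin n × Checkpoint β × Checkpoint β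

/-- A fin-vote from `S` to `T` is valid if `S.chain` is a prefix of `T.chain`
and `S.c < T.c`. -/
def ValidVote {β : Type} (S T : Checkpoint β) : Prop :=
  S.chain <+: T.chain ∧ S.c < T.c

/-- There is a supermajority link `S → T` in view `V`: the vote is valid and at least
`2n/3` validators (formally: `3·card ≥ 2n`) cast the fin-vote `(·, S, T)` in `V`. -/
def SMLink {β : Type} [DecidableEq β] {n : ℕ} (V : Finset (FinVote β n))
    (S T : Checkpoint β) : Prop :=
  ValidVote S T ∧
    2 * n ≤ 3 * (Finset.univ.filter (fun v : Fin n => (v, S, T) ∈ V)).card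

/-- A checkpoint is justified in view `V` (with genesis block `g`) if it is the genesis
checkpoint `(⟨[g], 0⟩)` or is reachable from it by a chain of supermajority links. -/
inductive Justified {β : Type} [DecidableEq β] (g : β) {n : ℕ}
    (V : Finset (FinVote β n)) : Checkpoint β → Prop
  | genesis : Justified g V ⟨[g], 0⟩
  | step (S C : Checkpoint β) : Justified g V S → SMLink V S C → Justified g V C

/-- A checkpoint `C` is finalized in view `V`: it is the genesis checkpoint, or it is
justified and there is a supermajority link `C → T` with `T.c = C.c + 1`. -/
def FinalizedCp {β : Type} [DecidableEq β] (g : β) {n : ℕ}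
    (V : Finset (FinVote β n)) (C : Checkpoint β) : Prop :=
  C = ⟨[g], 0⟩ ∨ (Justified g V C ∧ ∃ T : Checkpoint β, T.c = C.c + 1 ∧ SMLink V C T)

/-- A chain is finalized in view `V` if it is a prefix of the chain of some finalized
checkpoint. -/
def FinalizedChain {β : Type} [DecidableEq β] (g : β) {n : ℕ}
    (V : Finset (FinVote β n)) (χ : List β) : Prop :=
  ∃ C : Checkpoint β, FinalizedCp g V C ∧ χ <+: C.chain

/-- Validator `v` violates condition `E₁` (double voting) in the message set `M`:
`M` contains two distinct fin-votes by `v` whose targets have the same slot. -/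
def ViolatesE1 {β : Type} {n : ℕ} (M : Finset (FinVote β n)) (v : Fin n) : Prop :=
  ∃ S₁ T₁ S₂ T₂ : Checkpoint β, (v, S₁, T₁) ∈ M ∧ (v, S₂, T₂) ∈ M ∧
    (S₁, T₁) ≠ (S₂, T₂) ∧ T₁.c = T₂.c

/-- Validator `v` violates condition `E₂` (surround voting) in the message set `M`:
`M` contains fin-votes `(v, C₁, C₂)` and `(v, C₃, C₄)` with `C₃.c < C₁.c < C₂.c < C₄.c`. -/
def ViolatesE2 {β : Type} {n : ℕ} (M : Finset (FinVote β n)) (v : Fin n) : Prop :=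
  ∃ C₁ C₂ C₃ C₄ : Checkpoint β, (v, C₁, C₂) ∈ M ∧ (v, C₃, C₄) ∈ M ∧
    C₃.c < C₁.c ∧ C₁.c < C₂.c ∧ C₂.c < C₄.c

/-- **Case 2.3 of the proof of Lemma 6 (surround voting).** If there is a supermajority
link `Cf → T` in `V₁` with `T.c = Cf.c + 1`, and a supermajority link `A → B` in `V₂`
with `A.c < Cf.c` and `B.c > Cf.c + 1`, then at least `n/3` validators violated `E₂`
in `V₁ ∪ V₂`. -/
theorem surround_voting_detected {β : Type} [DecidableEq β] (n : ℕ)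
    (V₁ V₂ : Finset (FinVote β n)) (Cf T A B : Checkpoint β)
    (h₁ : SMLink V₁ Cf T) (hT : T.c = Cf.c + 1)
    (h₂ : SMLink V₂ A B) (hA : A.c < Cf.c) (hB : Cf.c + 1 < B.c) :
    ∃ W : Finset (Fin n), n ≤ 3 * W.card ∧ ∀ v ∈ W, ViolatesE2 (V₁ ∪ V₂) v := by
  classical
  set W₁ := Finset.univ.filter (fun v : Fin n => (v, Cf, T) ∈ V₁)
  set W₂ := Finset.univ.filter (fun v : Fin n => (v, A, B) ∈ V₂)
  refine ⟨W₁ ∩ W₂, ?_, ?_⟩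
  · have hcard : W₁.card + W₂.card ≤ (W₁ ∩ W₂).card + n := by
      have := Finset.card_union_add_card_inter W₁ W₂
      have hle : (W₁ ∪ W₂).card ≤ n := by
        simpa using Finset.card_le_card (Finset.subset_univ (W₁ ∪ W₂))
      omega
    have e1 : 2 * n ≤ 3 * W₁.card := h₁.2
    have e2 : 2 * n ≤ 3 * W₂.card := h₂.2
    omega
  · intro v hv
    rw [Finset.mem_inter, Finset.mem_filter, Finset.mem_filter] at hv
    exact ⟨Cf, T, A, B, Finset.mem_union_left _ hv.1.2,
      Finset.mem_union_right _ hv.2.2, hA, h₁.1.2, by omega⟩
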